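/- arXiv:2206.14852 — 9 statements merged into one kernel-verified Lean document; each statement's English description precedes it below -/
import Mathlib

section
/- Let d ≥ 1, let r : Fin d → ℂ be a (not necessarily injective) list of nonzero complex numbers, and let a : ℕ → ℂ be a sequence annihilated by the monic polynomial p(x) = ∏_{k} (x − r k), i.e. for every n, ∑_{i=0}^{d} (coefficient of x^i in p) · a(n+i) = 0. Then for every m ∈ ℕ, the sequence n ↦ a(mn) is annihilated by the monic polynomial p_m(x) = ∏_{k} (x − (r k)^m); that is, for every n, ∑_{i=0}^{d} (coefficient of x^i in p_m) · a(m(n+i)) = 0. -/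
open Polynomial Finset

noncomputable def Sh : (ℕ → ℂ) →ₗ[ℂ] (ℕ → ℂ) where
  toFun f := fun n => f (n + 1)
  map_add' := by intros; rfl
  map_smul' := by intros; rfl

lemma Sh_pow (i : ℕ) (f : ℕ → ℂ) (n : ℕ) : (Sh ^ i) f n = f (n + i) := by
  induction i generalizing n with
  | zero => simp
  | succ i ih =>
    rw [pow_succ']
    show (Sh ^ i) f (n + 1) = f (n + (i + 1))
    rw [ih]
    congr 1
    omega

lemma aeval_Sh_pow_apply (m : ℕ) (q : ℂ[X]) (f : ℕ → ℂ) (n : ℕ) :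
    (aeval (Sh ^ m) q) f n = q.sum fun i c => c * f (n + m * i) := by
  induction q using Polynomial.induction_on' with
  | add p q hp hq =>
    rw [map_add, Polynomial.sum_add_index]
    · show (aeval (Sh ^ m) p) f n + (aeval (Sh ^ m) q) f n = _
      rw [hp, hq]
    · intro i; ring
    · intro i c c'; ring
  | monomial i c =>
    rw [Polynomial.sum_monomial_index _ _ (by simp), aeval_monomial]
    show (c • ((Sh ^ m) ^ i)) f n = _
    rw [← pow_mul]
    show c * ((Sh ^ (m * i)) f n) = _
    rw [Sh_pow]

theorem msection_annihilated
    (d : ℕ) (hd : 1 ≤ d) (r : Fin d → ℂ) (hr : ∀ k, r k ≠ 0)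
    (a : ℕ → ℂ)
    (ha : ∀ n : ℕ, ∑ i ∈ Finset.range (d + 1),
      (∏ k : Fin d, (X - C (r k))).coeff i * a (n + i) = 0) :
    ∀ m n : ℕ, ∑ i ∈ Finset.range (d + 1),
      (∏ k : Fin d, (X - C ((r k) ^ m))).coeff i * a (m * (n + i)) = 0 := by
  intro m n
  set p : ℂ[X] := ∏ k : Fin d, (X - C (r k)) with hp
  set pm : ℂ[X] := ∏ k : Fin d, (X - C ((r k) ^ m)) with hpm
  set P : ℂ[X] := ∏ k : Fin d, ((X : ℂ[X]) ^ m - C ((r k) ^ m)) with hPdef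
  have hpdeg : p.natDegree = d := by
    rw [hp, natDegree_prod _ _ (fun k _ => X_sub_C_ne_zero (r k))]
    simp only [natDegree_X_sub_C]
    simp
  have hpmdeg : pm.natDegree = d := by
    rw [hpm, natDegree_prod _ _ (fun k _ => X_sub_C_ne_zero _)]
    simp only [natDegree_X_sub_C]
    simp
  have hdvd : p ∣ P :=
    Finset.prod_dvd_prod_of_dvd _ _ (fun k _ => by
      simpa [C_pow] using sub_dvd_pow_sub_pow (X : ℂ[X]) (C (r k)) m)
  obtain ⟨Q, hQ⟩ := hdvd
  have hpa : (aeval (Sh ^ 1) p) a = 0 := by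
    funext j
    rw [aeval_Sh_pow_apply,
      Polynomial.sum_over_range' (n := d + 1) _ (fun i => by ring) (by omega)]
    simpa using ha j
  have hPa : (aeval (Sh ^ 1) P) a = 0 := by
    rw [hQ, mul_comm, map_mul]
    show (aeval (Sh ^ 1) Q) ((aeval (Sh ^ 1) p) a) = 0
    rw [hpa, map_zero]
  have hcomp : pm.comp ((X : ℂ[X]) ^ m) = P := by
    rw [hpm, Polynomial.prod_comp]
    refine Finset.prod_congr rfl fun k _ => by simp
  have hkey : aeval (Sh ^ m) pm = aeval (Sh ^ 1) P := by
    rw [← hcomp, aeval_comp]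
    congr 1
    simp
  have : (aeval (Sh ^ m) pm) a (m * n) = (aeval (Sh ^ 1) P) a (m * n) := by
    rw [hkey]
  rw [aeval_Sh_pow_apply,
    Polynomial.sum_over_range' (n := d + 1) _ (fun i => by ring) (by omega)] at this
  rw [hPa] at this
  simp only [Pi.zero_apply] at this
  calc ∑ i ∈ Finset.range (d + 1), pm.coeff i * a (m * (n + i))
      = ∑ i ∈ Finset.range (d + 1), pm.coeff i * a (m * n + m * i) := by
        refine Finset.sum_congr rfl fun i _ => by ring_nf
    _ = 0 := this
end

section
/- For all natural numbers m and n, F(m(n+2)) = L(m) · F(m(n+1)) + (−1)^{m+1} · F(mn), where the identity is read in the integers. -/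
def F : ℕ → ℤ
  | 0 => 0
  | 1 => 1
  | (n + 2) => F (n + 1) + F n

def L : ℕ → ℤ
  | 0 => 2
  | 1 => 1
  | (n + 2) => L (n + 1) + L n

lemma addF (m : ℕ) : ∀ k, F (k + m + 1) = F (m + 1) * F (k + 1) + F m * F k := by
  intro k
  induction k using Nat.twoStepInduction with
  | zero => simp [F]
  | one =>
    rw [show 1 + m + 1 = m + 2 by omega]
    simp [F]
  | more k ih1 ih2 =>
    rw [show k + 2 + m + 1 = (k + m + 1) + 2 by omega, F,
        show k + m + 1 + 1 = k + 1 + m + 1 by omega, ih2, ih1]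
    have e1 : F (k + 2 + 1) = F (k + 2) + F (k + 1) := by
      rw [show k + 2 + 1 = (k + 1) + 2 from rfl, F]
    have e2 : F (k + 2) = F (k + 1) + F k := by rw [F]
    rw [e1, e2]
    ring

lemma cassini : ∀ m, F (m + 2) * F m - F (m + 1) ^ 2 = (-1) ^ (m + 1) := by
  intro m
  induction m with
  | zero => simp [F]
  | succ k ih =>
    have h : F (k + 3) = F (k + 2) + F (k + 1) := by rw [show k+3 = k+1+2 from rfl, F]
    have h2 : F (k + 2) = F (k + 1) + F k := by rw [F]
    rw [show k + 1 + 2 = k + 3 from rfl, h,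
        show ((-1:ℤ)) ^ (k + 1 + 1) = -(-1) ^ (k + 1) by rw [pow_succ]; ring, ← ih]
    linear_combination -F (k + 2) * h2

lemma LF : ∀ m, L (m + 1) = F (m + 2) + F m := by
  intro m
  induction m using Nat.twoStepInduction with
  | zero => simp [F, L]
  | one => show L 2 = F 3 + F 1; simp [F, L]
  | more k ih1 ih2 =>
    show L (k + 1 + 2) = F (k + 2 + 2) + F (k + 2)
    rw [L, F, ih1, ih2, show k+3 = k+1+2 from rfl, F, F]
    ring

lemma base0 (m : ℕ) : F (2 * m) = L m * F m := by
  cases m with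
  | zero => simp [F, L]
  | succ k =>
    have := addF (k+1) k
    rw [show 2 * (k+1) = k + (k+1) + 1 by ring, this, LF]
    cases k with
    | zero => simp [F]
    | succ j => rw [F]; ring

lemma base1 (m : ℕ) : F (2 * m + 1) = L m * F (m + 1) + (-1) ^ (m + 1) := by
  cases m with
  | zero => simp [F, L]
  | succ k =>
    have := addF (k+1) (k+1)
    rw [show 2 * (k+1) + 1 = (k+1) + (k+1) + 1 by ring, this, LF,
        show ((-1:ℤ)) ^ (k + 1 + 1) = -(-1) ^ (k + 1) by rw [pow_succ]; ring, ← cassini k]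
    rw [show k + 1 + 1 = k + 2 from rfl]
    ring

lemma key (m : ℕ) : ∀ k, F (k + 2 * m) = L m * F (k + m) + (-1) ^ (m + 1) * F k := by
  intro k
  induction k using Nat.twoStepInduction with
  | zero => simpa [F] using base0 m
  | one =>
    rw [show 1 + 2 * m = 2 * m + 1 by omega, show 1 + m = m + 1 by omega, base1 m,
        show F 1 = 1 from rfl]
    ring
  | more k ih1 ih2 =>
    rw [show k + 2 + 2*m = (k + 2*m) + 2 by ring, F,
        show k + 2*m + 1 = k + 1 + 2*m by ring, ih1, ih2,
        show k + 2 + m = (k + m) + 2 by ring, F, F,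
        show k + m + 1 = k + 1 + m by ring]
    ring

theorem fib_msection_recurrence (m n : ℕ) :
    F (m * (n + 2)) = L m * F (m * (n + 1)) + (-1 : ℤ) ^ (m + 1) * F (m * n) := by
  have := key m (m * n)
  rw [show m * (n+2) = m*n + 2*m by ring, show m * (n+1) = m*n + m by ring, this]
end

section
/- Let a : ℤ-valued sequence on ℕ satisfy the Perrin recurrence a(n+3) = a(n+1) + a(n) for all n. Let P : ℕ → ℤ be the Perrin sequence, P(0) = 3, P(1) = 0, P(2) = 2, P(n+3) = P(n+1) + P(n), and let c : ℕ → ℤ be defined by c(0) = −3, c(1) = 1, c(2) = −1, c(n+3) = −c(n+2) + c(n). Then for all natural numbers m and n, a(m(n+3)) = P(m) · a(m(n+2)) + c(m) · a(m(n+1)) + a(mn). -/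
def P : ℕ → ℤ
  | 0 => 3
  | 1 => 0
  | 2 => 2
  | (n + 3) => P (n + 1) + P n

def c : ℕ → ℤ
  | 0 => -3
  | 1 => 1
  | 2 => -1
  | (n + 3) => -c (n + 2) + c n

/-!
The companion matrix `M` of `X ^ 3 - X - 1` maps the state `(a k, a (k + 1), a (k + 2))` of a
Perrin solution to the state at `k + 1`, so `M ^ m` shifts states by `m`. Cayley–Hamilton for
`N = M ^ m` reads `N ^ 3 = tr N • N ^ 2 - tr (adj N) • N + det N • 1`. Here `tr (M ^ m) = P m`,
`det M = 1`, and `adj (M ^ m) = (adj M) ^ m` with `(adj M) ^ 3 = 1 - (adj M) ^ 2`, whose power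
traces are `-c m`. Applying the identity to the state at `m * n` gives the theorem.
-/

namespace Matrix

theorem pow_three_fin_three {R : Type*} [CommRing R] (A : Matrix (Fin 3) (Fin 3) R) :
    A ^ 3 = A.trace • A ^ 2 - A.adjugate.trace • A + A.det • 1 := by
  rw [eta_fin_three A]
  ext i j
  fin_cases i <;> fin_cases j <;>
    simp [pow_succ, adjugate_fin_three, det_fin_three, mul_apply, Fin.sum_univ_three] <;>
    ring

end Matrix

open Matrix

namespace Perrin

def companion : Matrix (Fin 3) (Fin 3) ℤ := !![0, 1, 0; 0, 0, 1; 1, 1, 0]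

def state (a : ℕ → ℤ) (k : ℕ) : Fin 3 → ℤ := ![a k, a (k + 1), a (k + 2)]

theorem companion_mulVec_state {a : ℕ → ℤ} (ha : ∀ n, a (n + 3) = a (n + 1) + a n) (k : ℕ) :
    companion *ᵥ state a k = state a (k + 1) := by
  ext i
  fin_cases i <;>
    simp [companion, state, mulVec, dotProduct, Fin.sum_univ_three, ha, add_comm (a k)]

theorem companion_pow_mulVec_state {a : ℕ → ℤ} (ha : ∀ n, a (n + 3) = a (n + 1) + a n)
    (m k : ℕ) : companion ^ m *ᵥ state a k = state a (k + m) := by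
  induction m with
  | zero => simp
  | succ m ih => rw [pow_succ', ← mulVec_mulVec, ih, companion_mulVec_state ha, add_assoc]

theorem companion_pow_three : companion ^ 3 = companion + 1 := by decide

theorem det_companion : companion.det = 1 := by decide

theorem trace_companion_pow : ∀ m, (companion ^ m).trace = P m
  | 0 => by decide
  | 1 => by decide
  | 2 => by decide
  | m + 3 => by
    rw [pow_add, companion_pow_three, mul_add, mul_one, ← pow_succ, trace_add,
      trace_companion_pow (m + 1), trace_companion_pow m, P]

theorem adjugate_companion : companion.adjugate = !![-1, 0, 1; 1, 0, 0; 0, 1, 0] := by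
  rw [companion, adjugate_fin_three]
  decide

theorem adjugate_companion_pow_three :
    companion.adjugate ^ 3 = 1 - companion.adjugate ^ 2 := by
  rw [adjugate_companion]; decide

theorem trace_adjugate_companion_pow : ∀ m, (companion.adjugate ^ m).trace = -c m
  | 0 => by decide
  | 1 => by rw [adjugate_companion]; decide
  | 2 => by rw [adjugate_companion]; decide
  | m + 3 => by
    rw [pow_add, adjugate_companion_pow_three, mul_sub, mul_one, ← pow_add, trace_sub,
      trace_adjugate_companion_pow m, trace_adjugate_companion_pow (m + 2), c]
    ring

theorem companion_pow_pow_three (m : ℕ) :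
    (companion ^ m) ^ 3 = P m • (companion ^ m) ^ 2 + c m • companion ^ m + 1 := by
  rw [pow_three_fin_three, trace_companion_pow, adjugate_pow, trace_adjugate_companion_pow,
    det_pow, det_companion, one_pow, one_smul, neg_smul, sub_neg_eq_add]

end Perrin

open Perrin in
theorem perrin_msection_recurrence
    (a : ℕ → ℤ) (ha : ∀ n : ℕ, a (n + 3) = a (n + 1) + a n) :
    ∀ m n : ℕ, a (m * (n + 3)) =
      P m * a (m * (n + 2)) + c m * a (m * (n + 1)) + a (m * n) := by
  intro m n
  have h := congrArg (fun A => (A *ᵥ state a (m * n)) 0) (companion_pow_pow_three m)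
  simp only [add_mulVec, smul_mulVec, one_mulVec, ← pow_mul, companion_pow_mulVec_state ha] at h
  simpa [state, mul_add] using h
end

section
/- For all natural numbers m and n, F(m(n+3))² = (5·F(m)² + 3·(−1)^m) · (F(m(n+2))² − (−1)^m · F(m(n+1))²) + (−1)^m · F(mn)², where the identity is read in the integers. -/
lemma F_add (b a : ℕ) : F (a + b + 1) = F (a + 1) * F (b + 1) + F a * F b := by
  induction a using Nat.twoStepInduction generalizing b with
  | zero => simp [F]
  | one =>
    rw [show 1 + b + 1 = b + 2 by ring]
    show F (b + 1) + F b = F (1 + 1) * F (b + 1) + F 1 * F b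
    show F (b + 1) + F b = (F 1 + F 0) * F (b + 1) + F 1 * F b
    simp [F]
  | more a ih1 ih2 =>
    rw [show a + 2 + b + 1 = (a + b + 1) + 2 by ring, show a + 2 + 1 = a + 3 by ring]
    show F (a + b + 1 + 1) + F (a + b + 1) = F (a + 3) * F (b + 1) + F (a + 2) * F b
    have h2 : a + b + 1 + 1 = (a + 1) + b + 1 := by ring
    rw [h2, ih2 b, ih1 b]
    show F (a + 2) * F (b + 1) + F (a + 1) * F b + (F (a + 1) * F (b + 1) + F a * F b)
        = (F (a + 2) + F (a + 1)) * F (b + 1) + (F (a + 1) + F a) * F b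
    ring

lemma F_cassini (m : ℕ) : F (m + 1) * F (m + 1) - F (m + 2) * F m = (-1 : ℤ) ^ m := by
  induction m with
  | zero => simp [F]
  | succ k ih =>
    have h : F (k + 3) = F (k + 2) + F (k + 1) := rfl
    have h2 : F (k + 2) = F (k + 1) + F k := rfl
    rw [pow_succ]
    linear_combination (-1 : ℤ) * ih - F (k + 1) * h + F (k + 2) * h2

lemma F_step (m k : ℕ) :
    F (k + m + m) = (2 * F (m + 1) - F m) * F (k + m) - (-1 : ℤ) ^ m * F k := by
  cases m with
  | zero => simp [F]; ring
  | succ j =>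
    have h1 : k + (j + 1) + (j + 1) = (k + j + 1) + j + 1 := by ring
    have h2 : k + (j + 1) = k + j + 1 := by ring
    have e1 := F_add j (k + j + 1)
    have e2 : F (k + j + 1) = F (k + 1) * F (j + 1) + F k * F j := F_add j k
    have e3 := F_add (j + 1) k
    have hc := F_cassini j
    have hr : F (j + 2) = F (j + 1) + F j := rfl
    rw [show k + (j + 1) + 1 = k + j + 1 + 1 by ring] at e3
    rw [h1, h2, e1, e3, e2, pow_succ]
    linear_combination (F k) * hc - (F (k + 1) * F (j + 1) + F k * F j) * hr

theorem fib_square_msection_recurrence (m n : ℕ) :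
    F (m * (n + 3)) ^ 2 =
      (5 * F m ^ 2 + 3 * (-1 : ℤ) ^ m) *
        (F (m * (n + 2)) ^ 2 - (-1 : ℤ) ^ m * F (m * (n + 1)) ^ 2) +
      (-1 : ℤ) ^ m * F (m * n) ^ 2 := by
  set L : ℤ := 2 * F (m + 1) - F m with hL
  set e : ℤ := (-1 : ℤ) ^ m with he
  have he2 : e ^ 2 = 1 := by
    rw [he, ← pow_mul, mul_comm, pow_mul]; simp
  have hLucas : L ^ 2 = 5 * F m ^ 2 + 4 * e := by
    cases m with
    | zero => simp [F, hL, he]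
    | succ j =>
      have hc := F_cassini j
      have hr : F (j + 2) = F (j + 1) + F j := rfl
      rw [hL, he, pow_succ]
      linear_combination (-4 : ℤ) * hc + 4 * F (j + 2) * hr
  have hrec : ∀ k : ℕ, F (m * (k + 2)) = L * F (m * (k + 1)) - e * F (m * k) := by
    intro k
    have := F_step m (m * k)
    rw [show m * k + m + m = m * (k + 2) by ring, show m * k + m = m * (k + 1) by ring] at this
    rw [this, hL, he]
  have hc := hrec n
  have hd := hrec (n + 1)
  rw [show n + 1 + 2 = n + 3 by ring, show n + 1 + 1 = n + 2 by ring] at hd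
  rw [hd, hc]
  have h5 : 5 * F m ^ 2 + 3 * e = L ^ 2 - e := by rw [hLucas]; ring
  rw [h5]
  linear_combination e * F (m * n) ^ 2 * he2
end

section
/- Let m ≥ 1, let r : Fin m → ℂ be nonzero complex numbers, let d : Fin m → ℕ, and let a : ℕ → ℂ be a sequence annihilated by the polynomial ∏_{k} (x − r k)^{(d k) + 1}. Then for all natural numbers i and j, the sequence n ↦ a(ni) · a(nj) is annihilated by the polynomial ∏_{k} ∏_{v} (x − (r k)^i · (r v)^j)^{(d k) + (d v) + 1}, where both k and v range over Fin m. -/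
/-!
Let `S` be the shift on sequences, so that `q` annihilates `b` exactly when `q(S) b = 0`.

The identity `(S - ρσ)(xy) = ((S - ρ)x)(Sy) + ρ·x((S - σ)y)` shows, by induction on `p + q`, that
if `(S - ρ)^p` kills `x` and `(S - σ)^q` kills `y`, then `(S - ρσ)^(p+q-1)` kills `xy`. Coprime
factors split kernels, so a sequence killed by `∏ₖ (S - αₖ)^(dₖ+1)` is a sum, over the distinct
values `ρ` of `α`, of sequences killed by `(S - ρ)^(M ρ)`, where `M ρ` is the multiplicity of `ρ`
as a root. Expanding `xy` bilinearly, each term is killed by a power of `S - ρσ` that divides the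
target product, since `A + B - 1 ≤ AB` for `A, B ≥ 1` bounds `M ρ + M' σ - 1` by the multiplicity
of `ρσ` there. Finally the dilation `x ↦ (n ↦ x(ni))` intertwines `S^i` with `S`, so it sends
sequences killed by `∏ₖ (S - rₖ)^(dₖ+1)` to sequences killed by `∏ₖ (S - rₖ^i)^(dₖ+1)`; the theorem
is the product statement for the dilations of `a` by `i` and by `j`.
-/

open Polynomial Finset

namespace CFinite

lemma ker_aeval_prod_eq_iSup {R M ι : Type*} [CommRing R] [AddCommGroup M] [Module R M]
    (f : Module.End R M) (s : Finset ι) (g : ι → R[X])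
    (hg : (s : Set ι).Pairwise fun i j => IsCoprime (g i) (g j)) :
    LinearMap.ker (aeval f (∏ i ∈ s, g i)) = ⨆ i ∈ s, LinearMap.ker (aeval f (g i)) := by
  classical
  induction s using Finset.induction_on with
  | empty => simp [Module.End.one_eq_id]
  | insert i s hi ih =>
    rw [prod_insert hi, Finset.iSup_insert, ← ih (hg.mono (by simp)),
      sup_ker_aeval_eq_ker_aeval_mul_of_coprime]
    exact IsCoprime.prod_right fun j hj =>
      hg (by simp) (by simp [hj]) (by rintro rfl; exact hi hj)

section CommRing

variable {R : Type*} [CommRing R]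

variable (R) in
noncomputable def shift : Module.End R (ℕ → R) := LinearMap.funLeft R R (· + 1)

variable (R) in
noncomputable def dilate (i : ℕ) : Module.End R (ℕ → R) := LinearMap.funLeft R R (· * i)

@[simp] lemma shift_apply (x : ℕ → R) (n : ℕ) : shift R x n = x (n + 1) := rfl

@[simp] lemma dilate_apply (i : ℕ) (x : ℕ → R) (n : ℕ) : dilate R i x n = x (n * i) := rfl

lemma shift_pow_apply (t : ℕ) (x : ℕ → R) (n : ℕ) : (shift R ^ t) x n = x (n + t) := by
  induction t generalizing x n with
  | zero => rfl
  | succ t ih => rw [pow_succ, Module.End.mul_apply, ih, shift_apply, add_assoc]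

lemma aeval_shift_apply {q : R[X]} {N : ℕ} (hN : q.natDegree < N) (x : ℕ → R) (n : ℕ) :
    aeval (shift R) q x n = ∑ t ∈ range N, q.coeff t * x (n + t) := by
  simp [aeval_eq_sum_range' hN, Finset.sum_apply, shift_pow_apply]

lemma aeval_shift_X_sub_C_apply (c : R) (x : ℕ → R) (n : ℕ) :
    aeval (shift R) (X - C c) x n = x (n + 1) - c * x n := by
  simp [Algebra.algebraMap_eq_smul_one]

lemma aeval_shift_eq_zero_of_dvd {p q : R[X]} (hpq : p ∣ q) {x : ℕ → R}
    (hx : aeval (shift R) p x = 0) : aeval (shift R) q x = 0 := by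
  obtain ⟨u, rfl⟩ := hpq
  rw [mul_comm, aeval_mul, Module.End.mul_apply, hx, map_zero]

lemma aeval_shift_shift_eq_zero {p : R[X]} {x : ℕ → R} (hx : aeval (shift R) p x = 0) :
    aeval (shift R) p (shift R x) = 0 := by
  rw [show shift R x = aeval (shift R) (X : R[X]) x by rw [aeval_X], ← Module.End.mul_apply,
    ← aeval_mul]
  exact aeval_shift_eq_zero_of_dvd (dvd_mul_right p X) hx

lemma shift_pow_mul_dilate (i t : ℕ) :
    shift R ^ t * dilate R i = dilate R i * (shift R ^ i) ^ t := by
  ext x n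
  simp [shift_pow_apply, ← pow_mul]
  ring_nf

lemma aeval_shift_dilate (q : R[X]) (i : ℕ) (x : ℕ → R) :
    aeval (shift R) q (dilate R i x) = dilate R i (aeval (shift R) (q.comp (X ^ i)) x) := by
  rw [aeval_comp, aeval_X_pow, aeval_endomorphism, aeval_endomorphism, Polynomial.sum_def,
    Polynomial.sum_def, map_sum]
  refine Finset.sum_congr rfl fun t _ => ?_
  rw [map_smul, ← Module.End.mul_apply, shift_pow_mul_dilate, Module.End.mul_apply]

lemma aeval_shift_X_sub_C_mul (ρ σ : R) (x y : ℕ → R) :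
    aeval (shift R) (X - C (ρ * σ)) (x * y) =
      aeval (shift R) (X - C ρ) x * shift R y + ρ • (x * aeval (shift R) (X - C σ) y) := by
  ext n
  simp only [aeval_shift_X_sub_C_apply, Pi.add_apply, Pi.mul_apply, Pi.smul_apply, smul_eq_mul,
    shift_apply]
  ring

lemma aeval_shift_X_sub_C_pow_mul {ρ σ : R} :
    ∀ {p q : ℕ} {x y : ℕ → R}, aeval (shift R) ((X - C ρ) ^ p) x = 0 →
      aeval (shift R) ((X - C σ) ^ q) y = 0 →
      aeval (shift R) ((X - C (ρ * σ)) ^ (p + q - 1)) (x * y) = 0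
  | 0, _, x, y, hx, _ => by simp_all
  | _, 0, x, y, _, hy => by simp_all
  | p + 1, q + 1, x, y, hx, hy => by
    have hx' : aeval (shift R) ((X - C ρ) ^ p) (aeval (shift R) (X - C ρ) x) = 0 := by
      rwa [← Module.End.mul_apply, ← aeval_mul, ← pow_succ]
    have hy' : aeval (shift R) ((X - C σ) ^ q) (aeval (shift R) (X - C σ) y) = 0 := by
      rwa [← Module.End.mul_apply, ← aeval_mul, ← pow_succ]
    rw [show p + 1 + (q + 1) - 1 = p + (q + 1) - 1 + 1 by omega, pow_succ, aeval_mul,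
      Module.End.mul_apply, aeval_shift_X_sub_C_mul, map_add, map_smul,
      aeval_shift_X_sub_C_pow_mul hx' (aeval_shift_shift_eq_zero hy),
      show p + (q + 1) - 1 = p + 1 + q - 1 by omega, aeval_shift_X_sub_C_pow_mul hx hy',
      smul_zero, add_zero]

lemma aeval_shift_dilate_eq_zero {p q : R[X]} {i : ℕ} (hpq : p ∣ q.comp (X ^ i)) {x : ℕ → R}
    (hx : aeval (shift R) p x = 0) : aeval (shift R) q (dilate R i x) = 0 := by
  rw [aeval_shift_dilate, aeval_shift_eq_zero_of_dvd hpq hx, map_zero]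

end CommRing

section Polynomials

variable {R ι κ : Type*} [CommRing R]

lemma natDegree_prod_X_sub_C_pow_le (s : Finset ι) (α : ι → R) (e : ι → ℕ) :
    (∏ k ∈ s, (X - C (α k)) ^ e k).natDegree ≤ ∑ k ∈ s, e k :=
  (natDegree_prod_le s _).trans <| sum_le_sum fun _ _ =>
    (natDegree_pow_le_of_le _ (natDegree_X_sub_C_le _)).trans (mul_one _).le

lemma prod_X_sub_C_pow_dvd_comp (s : Finset ι) (α : ι → R) (e : ι → ℕ) (i : ℕ) :
    ∏ k ∈ s, (X - C (α k)) ^ e k ∣ (∏ k ∈ s, (X - C (α k ^ i)) ^ e k).comp (X ^ i) := by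
  rw [Polynomial.prod_comp]
  refine prod_dvd_prod_of_dvd _ _ fun k _ => ?_
  rw [pow_comp, sub_comp, X_comp, C_comp, C_pow]
  exact pow_dvd_pow_of_dvd (sub_dvd_pow_sub_pow X (C (α k)) i) _

lemma prod_X_sub_C_pow_eq_prod_image [DecidableEq R] (s : Finset ι) (α : ι → R) (e : ι → ℕ) :
    ∏ k ∈ s, (X - C (α k)) ^ e k = ∏ ρ ∈ s.image α, (X - C ρ) ^ ∑ k ∈ s with α k = ρ, e k := by
  rw [← prod_fiberwise_of_maps_to fun k hk => mem_image_of_mem α hk]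
  refine prod_congr rfl fun ρ _ => ?_
  rw [← prod_pow_eq_pow_sum]
  exact prod_congr rfl fun k hk => by rw [(mem_filter.1 hk).2]

lemma sum_add_sum_le_sum_sum_add_one {A : Finset ι} {B : Finset κ} (hA : A.Nonempty)
    (hB : B.Nonempty) (d : ι → ℕ) (d' : κ → ℕ) :
    ∑ k ∈ A, (d k + 1) + ∑ v ∈ B, (d' v + 1) ≤ ∑ k ∈ A, ∑ v ∈ B, (d k + d' v + 1) + 1 := by
  have ha : 1 ≤ #A := hA.card_pos
  have hb : 1 ≤ #B := hB.card_pos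
  have hA' := Nat.le_mul_of_pos_left (∑ k ∈ A, d k) hb
  have hB' := Nat.le_mul_of_pos_left (∑ v ∈ B, d' v) ha
  have hAB : #A + #B ≤ #A * #B + 1 := by nlinarith
  simp only [sum_add_distrib, sum_const, smul_eq_mul, mul_one, ← mul_sum]
  omega

lemma X_sub_C_pow_dvd_prod_prod [DecidableEq R] {s : Finset ι} {t : Finset κ} {α : ι → R}
    {β : κ → R} (d : ι → ℕ) (d' : κ → ℕ) {ρ σ : R} (hρ : ρ ∈ s.image α) (hσ : σ ∈ t.image β) :
    (X - C (ρ * σ)) ^ (∑ k ∈ s with α k = ρ, (d k + 1) + ∑ v ∈ t with β v = σ, (d' v + 1) - 1) ∣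
      ∏ k ∈ s, ∏ v ∈ t, (X - C (α k * β v)) ^ (d k + d' v + 1) := by
  have hA : {k ∈ s | α k = ρ}.Nonempty := by
    obtain ⟨k, hk, rfl⟩ := mem_image.1 hρ
    exact ⟨k, mem_filter.2 ⟨hk, rfl⟩⟩
  have hB : {v ∈ t | β v = σ}.Nonempty := by
    obtain ⟨v, hv, rfl⟩ := mem_image.1 hσ
    exact ⟨v, mem_filter.2 ⟨hv, rfl⟩⟩
  calc _ ∣ (X - C (ρ * σ)) ^ ∑ k ∈ s with α k = ρ, ∑ v ∈ t with β v = σ, (d k + d' v + 1) :=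
        pow_dvd_pow _ (by have := sum_add_sum_le_sum_sum_add_one hA hB d d'; omega)
    _ = ∏ k ∈ s with α k = ρ, ∏ v ∈ t with β v = σ, (X - C (α k * β v)) ^ (d k + d' v + 1) := by
        simp_rw [← prod_pow_eq_pow_sum]
        refine prod_congr rfl fun k hk => prod_congr rfl fun v hv => ?_
        rw [(mem_filter.1 hk).2, (mem_filter.1 hv).2]
    _ ∣ ∏ k ∈ s, ∏ v ∈ t, (X - C (α k * β v)) ^ (d k + d' v + 1) :=
        (prod_dvd_prod_of_subset _ _ _ (filter_subset _ _)).trans <|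
          prod_dvd_prod_of_dvd _ _ fun k _ => prod_dvd_prod_of_subset _ _ _ (filter_subset _ _)

end Polynomials

lemma exists_sum_of_aeval_shift_prod_X_sub_C_pow_eq_zero {K ι : Type*} [Field K] [DecidableEq K]
    {s : Finset ι} {α : ι → K} {e : ι → ℕ} {x : ℕ → K}
    (hx : aeval (shift K) (∏ k ∈ s, (X - C (α k)) ^ e k) x = 0) :
    ∃ c : ∀ ρ, LinearMap.ker (aeval (shift K) ((X - C ρ) ^ ∑ k ∈ s with α k = ρ, e k)),
      ∑ ρ ∈ s.image α, (c ρ : ℕ → K) = x := by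
  rw [prod_X_sub_C_pow_eq_prod_image, ← LinearMap.mem_ker, ker_aeval_prod_eq_iSup] at hx
  · exact (Submodule.mem_iSup_finset_iff_exists_sum _ _).1 hx
  · exact fun ρ _ σ _ hρσ => (isCoprime_X_sub_C_of_isUnit_sub (sub_ne_zero.2 hρσ).isUnit).pow

theorem aeval_shift_prod_prod_mul_eq_zero {K ι κ : Type*} [Field K] {s : Finset ι}
    {t : Finset κ} {α : ι → K} {β : κ → K} {d : ι → ℕ} {d' : κ → ℕ} {x y : ℕ → K}
    (hx : aeval (shift K) (∏ k ∈ s, (X - C (α k)) ^ (d k + 1)) x = 0)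
    (hy : aeval (shift K) (∏ v ∈ t, (X - C (β v)) ^ (d' v + 1)) y = 0) :
    aeval (shift K) (∏ k ∈ s, ∏ v ∈ t, (X - C (α k * β v)) ^ (d k + d' v + 1)) (x * y) = 0 := by
  classical
  obtain ⟨cx, rfl⟩ := exists_sum_of_aeval_shift_prod_X_sub_C_pow_eq_zero hx
  obtain ⟨cy, rfl⟩ := exists_sum_of_aeval_shift_prod_X_sub_C_pow_eq_zero hy
  rw [sum_mul_sum, map_sum]
  refine sum_eq_zero fun ρ hρ => (map_sum _ _ _).trans <| sum_eq_zero fun σ hσ => ?_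
  exact aeval_shift_eq_zero_of_dvd (X_sub_C_pow_dvd_prod_prod d d' hρ hσ)
    (aeval_shift_X_sub_C_pow_mul (cx ρ).2 (cy σ).2)

end CFinite

open CFinite in
theorem product_annihilated_general
    (m : ℕ) (r : Fin m → ℂ)
    (d : Fin m → ℕ) (a : ℕ → ℂ)
    (ha : ∀ n : ℕ, ∑ t ∈ Finset.range ((∑ k : Fin m, (d k + 1)) + 1),
      (∏ k : Fin m, (X - C (r k)) ^ (d k + 1)).coeff t * a (n + t) = 0) :
    ∀ i j : ℕ, ∀ n : ℕ,
      ∑ t ∈ Finset.range ((∑ k : Fin m, ∑ v : Fin m, (d k + d v + 1)) + 1),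
        (∏ k : Fin m, ∏ v : Fin m,
          (X - C ((r k) ^ i * (r v) ^ j)) ^ (d k + d v + 1)).coeff t *
        (a ((n + t) * i) * a ((n + t) * j)) = 0 := by
  have hF : aeval (shift ℂ) (∏ k, (X - C (r k)) ^ (d k + 1)) a = 0 := funext fun n =>
    (aeval_shift_apply (Nat.lt_succ_of_le (natDegree_prod_X_sub_C_pow_le _ _ _)) a n).trans (ha n)
  have hdilate (i : ℕ) :
      aeval (shift ℂ) (∏ k, (X - C (r k ^ i)) ^ (d k + 1)) (dilate ℂ i a) = 0 :=
    aeval_shift_dilate_eq_zero (prod_X_sub_C_pow_dvd_comp _ _ _ i) hF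
  intro i j n
  have hdeg : (∏ k : Fin m, ∏ v : Fin m,
      (X - C ((r k) ^ i * (r v) ^ j)) ^ (d k + d v + 1)).natDegree ≤
        ∑ k : Fin m, ∑ v : Fin m, (d k + d v + 1) :=
    (natDegree_prod_le _ _).trans <| sum_le_sum fun _ _ => natDegree_prod_X_sub_C_pow_le _ _ _
  exact (aeval_shift_apply (Nat.lt_succ_of_le hdeg) _ n).symm.trans
    (congrFun (aeval_shift_prod_prod_mul_eq_zero (hdilate i) (hdilate j)) n)

theorem product_annihilated
    (m : ℕ) (hm : 1 ≤ m) (r : Fin m → ℂ) (hr : ∀ k, r k ≠ 0)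
    (d : Fin m → ℕ) (a : ℕ → ℂ)
    (ha : ∀ n : ℕ, ∑ t ∈ Finset.range ((∑ k : Fin m, (d k + 1)) + 1),
      (∏ k : Fin m, (X - C (r k)) ^ (d k + 1)).coeff t * a (n + t) = 0) :
    ∀ i j : ℕ, ∀ n : ℕ,
      ∑ t ∈ Finset.range ((∑ k : Fin m, ∑ v : Fin m, (d k + d v + 1)) + 1),
        (∏ k : Fin m, ∏ v : Fin m,
          (X - C ((r k) ^ i * (r v) ^ j)) ^ (d k + d v + 1)).coeff t *
        (a ((n + t) * i) * a ((n + t) * j)) = 0 :=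
  product_annihilated_general m r d a ha
end

section
/- Let r₁, r₂ be distinct nonzero complex numbers and let a : ℕ → ℂ satisfy a(n+2) = (r₁ + r₂) · a(n+1) − r₁r₂ · a(n) for all n. Then for all natural numbers i ≥ j, the sequence n ↦ a(ni) · a(nj) is annihilated by the quartic polynomial (x² − (r₁^{i+j} + r₂^{i+j}) x + (r₁r₂)^{i+j}) · (x² − (r₁r₂)^j (r₁^{i−j} + r₂^{i−j}) x + (r₁r₂)^{i+j}). -/
open Polynomial Finset

lemma key_geom_sum (q : ℂ[X]) (hq : q.natDegree < 5) (ρ : ℂ) (hρ : q.eval ρ = 0) (n : ℕ) :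
    ∑ k ∈ Finset.range 5, q.coeff k * ρ ^ (n + k) = 0 := by
  have h := Polynomial.eval_eq_sum_range' hq ρ
  have : ∑ k ∈ Finset.range 5, q.coeff k * ρ ^ (n + k)
      = ρ ^ n * ∑ k ∈ Finset.range 5, q.coeff k * ρ ^ k := by
    rw [Finset.mul_sum]
    apply Finset.sum_congr rfl
    intro k _
    rw [pow_add]; ring
  rw [this, ← h, hρ, mul_zero]

theorem second_order_product_annihilated
    (r₁ r₂ : ℂ) (hne : r₁ ≠ r₂) (h₁ : r₁ ≠ 0) (h₂ : r₂ ≠ 0)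
    (a : ℕ → ℂ)
    (ha : ∀ n : ℕ, a (n + 2) = (r₁ + r₂) * a (n + 1) - r₁ * r₂ * a n) :
    ∀ i j : ℕ, j ≤ i → ∀ n : ℕ,
      ∑ k ∈ Finset.range 5,
        ((X ^ 2 - C (r₁ ^ (i + j) + r₂ ^ (i + j)) * X + C ((r₁ * r₂) ^ (i + j))) *
         (X ^ 2 - C ((r₁ * r₂) ^ j * (r₁ ^ (i - j) + r₂ ^ (i - j))) * X +
           C ((r₁ * r₂) ^ (i + j)))).coeff k *
        (a ((n + k) * i) * a ((n + k) * j)) = 0 := by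
  have hd : r₁ - r₂ ≠ 0 := sub_ne_zero.mpr hne
  set c₁ : ℂ := (a 1 - r₂ * a 0) / (r₁ - r₂) with hc₁
  set c₂ : ℂ := (r₁ * a 0 - a 1) / (r₁ - r₂) with hc₂
  have hform : ∀ m, a m = c₁ * r₁ ^ m + c₂ * r₂ ^ m := by
    intro m
    induction m using Nat.strong_induction_on with
    | _ m ih =>
      match m with
      | 0 => rw [hc₁, hc₂]; field_simp; ring
      | 1 => rw [hc₁, hc₂]; field_simp; ring
      | (k+2) =>
        rw [ha k, ih (k+1) (by omega), ih k (by omega)]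
        ring
  intro i j hij n
  obtain ⟨d, rfl⟩ := Nat.exists_eq_add_of_le hij
  set q : ℂ[X] :=
    (X ^ 2 - C (r₁ ^ (j + d + j) + r₂ ^ (j + d + j)) * X + C ((r₁ * r₂) ^ (j + d + j))) *
    (X ^ 2 - C ((r₁ * r₂) ^ j * (r₁ ^ (j + d - j) + r₂ ^ (j + d - j))) * X +
      C ((r₁ * r₂) ^ (j + d + j))) with hq
  have hdeg : q.natDegree < 5 := by
    have : q.natDegree ≤ 4 := by rw [hq]; compute_degree
    omega
  have hsub : j + d - j = d := by omega
  have e1 : q.eval (r₁ ^ (j + d) * r₁ ^ j) = 0 := by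
    simp only [hq, eval_mul, eval_add, eval_sub, eval_pow, eval_C, eval_X, hsub, pow_add, mul_pow]
    ring
  have e2 : q.eval (r₂ ^ (j + d) * r₂ ^ j) = 0 := by
    simp only [hq, eval_mul, eval_add, eval_sub, eval_pow, eval_C, eval_X, hsub, pow_add, mul_pow]
    ring
  have e3 : q.eval (r₁ ^ (j + d) * r₂ ^ j) = 0 := by
    simp only [hq, eval_mul, eval_add, eval_sub, eval_pow, eval_C, eval_X, hsub, pow_add, mul_pow]
    ring
  have e4 : q.eval (r₂ ^ (j + d) * r₁ ^ j) = 0 := by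
    simp only [hq, eval_mul, eval_add, eval_sub, eval_pow, eval_C, eval_X, hsub, pow_add, mul_pow]
    ring
  have expand : ∀ k, a ((n + k) * (j + d)) * a ((n + k) * j)
      = c₁ ^ 2 * (r₁ ^ (j + d) * r₁ ^ j) ^ (n + k)
      + c₁ * c₂ * (r₁ ^ (j + d) * r₂ ^ j) ^ (n + k)
      + c₂ * c₁ * (r₂ ^ (j + d) * r₁ ^ j) ^ (n + k)
      + c₂ ^ 2 * (r₂ ^ (j + d) * r₂ ^ j) ^ (n + k) := by
    intro k
    rw [hform, hform]
    simp only [mul_pow, pow_mul']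
    ring
  calc ∑ k ∈ Finset.range 5, q.coeff k * (a ((n + k) * (j + d)) * a ((n + k) * j))
      = c₁ ^ 2 * ∑ k ∈ Finset.range 5, q.coeff k * (r₁ ^ (j + d) * r₁ ^ j) ^ (n + k)
      + c₁ * c₂ * ∑ k ∈ Finset.range 5, q.coeff k * (r₁ ^ (j + d) * r₂ ^ j) ^ (n + k)
      + c₂ * c₁ * ∑ k ∈ Finset.range 5, q.coeff k * (r₂ ^ (j + d) * r₁ ^ j) ^ (n + k)
      + c₂ ^ 2 * ∑ k ∈ Finset.range 5, q.coeff k * (r₂ ^ (j + d) * r₂ ^ j) ^ (n + k) := by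
        simp only [Finset.mul_sum, ← Finset.sum_add_distrib]
        apply Finset.sum_congr rfl
        intro k _
        rw [expand k]
        ring
    _ = 0 := by
        rw [key_geom_sum q hdeg _ e1 n, key_geom_sum q hdeg _ e3 n,
            key_geom_sum q hdeg _ e4 n, key_geom_sum q hdeg _ e2 n]
        ring
end

section
/- For all natural numbers i ≥ j, the integer sequence n ↦ F(ni) · F(nj) is annihilated by the quartic polynomial (x² − L(i+j)·x + (−1)^{i+j}) · (x² − (−1)^j · L(i−j) · x + (−1)^{i+j}); that is, writing q for this polynomial, for every n, ∑_{k=0}^{4} (coefficient of x^k in q) · F((n+k)i) · F((n+k)j) = 0. -/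
open Polynomial Finset

open scoped goldenRatio

/-!
By Binet's formula, `5 F(mi) F(mj)` is a signed sum of the `m`-th powers of the four products
`φ^i φ^j, ψ^i ψ^j, φ^i ψ^j, ψ^i φ^j`. Since `φψ = -1`, the first two have sum `L(i+j)` and product
`(-1)^(i+j)`, the last two have sum `(-1)^j L(i-j)` and product `(-1)^(i+j)`: they are the roots of
the two quadratic factors. A polynomial annihilates every geometric sequence whose ratio is one of
its roots, hence every linear combination of such sequences.
-/

section GeometricSolutions

variable {R : Type*} [CommRing R]

theorem sum_coeff_mul_pow_add {q : R[X]} {N : ℕ} (hN : q.natDegree < N) (r : R) (n : ℕ) :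
    ∑ k ∈ range N, q.coeff k * r ^ (n + k) = r ^ n * q.eval r := by
  rw [eval_eq_sum_range' hN, mul_sum]
  exact sum_congr rfl fun k _ => by ring

theorem sum_coeff_mul_eq_zero_of_isRoot {q : R[X]} {N : ℕ} (hN : q.natDegree < N)
    {ι : Type*} (s : Finset ι) (c r : ι → R) (hr : ∀ i ∈ s, q.IsRoot (r i))
    {b : ℕ → R} (hb : ∀ m, b m = ∑ i ∈ s, c i * r i ^ m) (n : ℕ) :
    ∑ k ∈ range N, q.coeff k * b (n + k) = 0 := by
  simp_rw [hb, mul_sum]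
  rw [sum_comm]
  refine sum_eq_zero fun i hi => ?_
  calc ∑ k ∈ range N, q.coeff k * (c i * r i ^ (n + k))
      = c i * ∑ k ∈ range N, q.coeff k * r i ^ (n + k) := by
        rw [mul_sum]; exact sum_congr rfl fun k _ => by ring
    _ = 0 := by rw [sum_coeff_mul_pow_add hN, (hr i hi).eq_zero, mul_zero, mul_zero]

end GeometricSolutions

theorem X_sq_sub_C_add_mul_X_add_C_mul {R : Type*} [CommRing R] (r s : R) :
    (X ^ 2 - C (r + s) * X + C (r * s) : R[X]) = (X - C r) * (X - C s) := by
  simp only [map_add, map_mul]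
  ring

theorem F_eq_fib : ∀ m, F m = Nat.fib m
  | 0 => rfl
  | 1 => rfl
  | m + 2 => by rw [F, F_eq_fib (m + 1), F_eq_fib m, Nat.fib_add_two]; push_cast; ring

theorem F_cast_eq (m : ℕ) : (F m : ℝ) = (φ ^ m - ψ ^ m) / √5 := by
  rw [F_eq_fib, Int.cast_natCast, Real.coe_fib_eq]

theorem L_cast_eq : ∀ m, (L m : ℝ) = φ ^ m + ψ ^ m
  | 0 => by norm_num [L]
  | 1 => by norm_num [L, Real.goldenRatio_add_goldenConj]
  | m + 2 => by
    rw [L, Int.cast_add, L_cast_eq (m + 1), L_cast_eq m]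
    linear_combination (-φ ^ m) * Real.goldenRatio_sq - ψ ^ m * Real.goldenConj_sq

noncomputable def fibProductRatios (i j : ℕ) : Fin 4 → ℝ :=
  ![φ ^ i * φ ^ j, φ ^ i * ψ ^ j, ψ ^ i * φ ^ j, ψ ^ i * ψ ^ j]

theorem F_mul_F_cast_eq (i j m : ℕ) :
    (F (m * i) : ℝ) * F (m * j) =
      ∑ k, ![1 / 5, -1 / 5, -1 / 5, 1 / 5] k * fibProductRatios i j k ^ m := by
  have h5 : √5 ^ 2 = 5 := Real.sq_sqrt (by norm_num)
  simp only [mul_comm m, F_cast_eq, pow_mul, one_div, fibProductRatios, Fin.sum_univ_four,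
    Matrix.cons_val_zero, Matrix.cons_val_one, Matrix.cons_val, mul_pow]
  field_simp
  rw [h5]
  ring

theorem map_quartic_eq_prod {i j : ℕ} (hji : j ≤ i) :
    ((X ^ 2 - C (L (i + j)) * X + C ((-1 : ℤ) ^ (i + j))) *
        (X ^ 2 - C ((-1 : ℤ) ^ j * L (i - j)) * X + C ((-1 : ℤ) ^ (i + j))) : ℤ[X]).map
        (Int.castRingHom ℝ) = ∏ k, (X - C (fibProductRatios i j k)) := by
  have neg_one_pow : ∀ m : ℕ, (-1 : ℝ) ^ m = φ ^ m * ψ ^ m := fun m => by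
    rw [← mul_pow, Real.goldenRatio_mul_goldenConj]
  have hsum₁ : φ ^ i * φ ^ j + ψ ^ i * ψ ^ j = L (i + j) := by rw [L_cast_eq, pow_add, pow_add]
  have hprod₁ : φ ^ i * φ ^ j * (ψ ^ i * ψ ^ j) = (-1) ^ (i + j) := by
    rw [neg_one_pow, pow_add, pow_add]
  have hsum₂ : φ ^ i * ψ ^ j + ψ ^ i * φ ^ j = (-1) ^ j * L (i - j) := by
    obtain ⟨d, rfl⟩ := Nat.exists_eq_add_of_le hji
    rw [Nat.add_sub_cancel_left, L_cast_eq, neg_one_pow]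
    ring
  have hprod₂ : φ ^ i * ψ ^ j * (ψ ^ i * φ ^ j) = (-1) ^ (i + j) := by rw [← hprod₁]; ring
  calc _ = (X ^ 2 - C (φ ^ i * φ ^ j + ψ ^ i * ψ ^ j) * X + C (φ ^ i * φ ^ j * (ψ ^ i * ψ ^ j))) *
        (X ^ 2 - C (φ ^ i * ψ ^ j + ψ ^ i * φ ^ j) * X + C (φ ^ i * ψ ^ j * (ψ ^ i * φ ^ j))) := by
        rw [hsum₁, hprod₁, hsum₂, hprod₂]
        simp only [Polynomial.map_mul, Polynomial.map_add, Polynomial.map_sub, Polynomial.map_pow,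
          map_X, Polynomial.map_C]
        simp only [eq_intCast, Int.cast_mul, Int.cast_pow, Int.cast_neg, Int.cast_one]
    _ = ∏ k, (X - C (fibProductRatios i j k)) := by
        rw [X_sq_sub_C_add_mul_X_add_C_mul, X_sq_sub_C_add_mul_X_add_C_mul, Fin.prod_univ_four]
        simp only [fibProductRatios, Matrix.cons_val_zero, Matrix.cons_val_one, Matrix.cons_val]
        ring

theorem fib_product_annihilated :
    ∀ i j : ℕ, j ≤ i → ∀ n : ℕ,
      ∑ k ∈ Finset.range 5,
        ((X ^ 2 - C (L (i + j)) * X + C ((-1 : ℤ) ^ (i + j))) *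
         (X ^ 2 - C ((-1 : ℤ) ^ j * L (i - j)) * X +
           C ((-1 : ℤ) ^ (i + j))) : Polynomial ℤ).coeff k *
        (F ((n + k) * i) * F ((n + k) * j)) = 0 := by
  intro i j hji n
  have hdeg : (∏ k, (X - C (fibProductRatios i j k))).natDegree < 5 := by simp
  have hroots : ∀ k ∈ univ,
      (∏ l, (X - C (fibProductRatios i j l))).IsRoot (fibProductRatios i j k) := fun k hk => by
    simp [IsRoot, eval_prod, prod_eq_zero hk]
  have h := sum_coeff_mul_eq_zero_of_isRoot hdeg univ _ _ hroots (F_mul_F_cast_eq i j) n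
  rw [← map_quartic_eq_prod hji] at h
  simp only [coeff_map, eq_intCast] at h
  exact_mod_cast h
end

section
/- Let a : ℕ → ℂ be a sequence, let p be a polynomial of degree d ≥ 1 with complex coefficients such that for every n, ∑_{i=0}^{d} (coefficient of x^i in p) · a(n+i) = 0, and suppose p(1) ≠ 0. Let q be the (unique) polynomial with p = (x − 1)·q + p(1), and define b(n) = −(∑_{i=0}^{d−1} (coefficient of x^i in q) · a(n+i)) / p(1). Then for every n, ∑_{k=0}^{n−1} a(k) = b(n) − b(0). -/
open Polynomial Finset

theorem telescoping_sum
    (a : ℕ → ℂ) (p : Polynomial ℂ) (d : ℕ) (hd : 1 ≤ d) (hdeg : p.natDegree = d)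
    (ha : ∀ n : ℕ, ∑ i ∈ Finset.range (d + 1), p.coeff i * a (n + i) = 0)
    (hp1 : p.eval 1 ≠ 0)
    (q : Polynomial ℂ) (hq : p = (X - 1) * q + C (p.eval 1))
    (b : ℕ → ℂ)
    (hb : ∀ n : ℕ, b n =
      -(∑ i ∈ Finset.range d, q.coeff i * a (n + i)) / p.eval 1) :
    ∀ n : ℕ, ∑ k ∈ Finset.range n, a k = b n - b 0 := by
  have hqd : q.coeff d = 0 := by
    rcases eq_or_ne q 0 with h | h
    · simp [h]
    · apply coeff_eq_zero_of_natDegree_lt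
      have hX : (X - 1 : ℂ[X]) = X - C 1 := by rw [C_1]
      have hXne : (X - 1 : ℂ[X]) ≠ 0 := by rw [hX]; exact X_sub_C_ne_zero 1
      have h1 : ((X - 1 : ℂ[X]) * q).natDegree = 1 + q.natDegree := by
        rw [natDegree_mul hXne h, hX, natDegree_X_sub_C]
      have h2 : ((X - 1 : ℂ[X]) * q) = p - C (p.eval 1) := by linear_combination -hq
      have h3 : ((X - 1 : ℂ[X]) * q).natDegree ≤ d := by
        rw [h2]
        refine le_trans (natDegree_sub_le _ _) ?_
        simp [hdeg]
      omega
  have hsum : ∀ n, ∑ i ∈ Finset.range (d + 1), p.coeff i * a (n + i) =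
      (∑ i ∈ Finset.range d, q.coeff i * a (n + 1 + i))
      - (∑ i ∈ Finset.range d, q.coeff i * a (n + i)) + p.eval 1 * a n := by
    intro n
    have hp : ∀ i, p.coeff i = (X * q).coeff i - q.coeff i + (C (p.eval 1)).coeff i := by
      intro i
      conv_lhs => rw [hq]
      simp [sub_mul]
    calc ∑ i ∈ Finset.range (d + 1), p.coeff i * a (n + i)
        = ∑ i ∈ Finset.range (d + 1),
            ((X * q).coeff i * a (n + i) - q.coeff i * a (n + i)
              + (C (p.eval 1)).coeff i * a (n + i)) := by
          refine Finset.sum_congr rfl fun i _ => ?_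
          rw [hp i]; ring
      _ = (∑ i ∈ Finset.range (d + 1), (X * q).coeff i * a (n + i))
          - (∑ i ∈ Finset.range (d + 1), q.coeff i * a (n + i))
          + (∑ i ∈ Finset.range (d + 1), (C (p.eval 1)).coeff i * a (n + i)) := by
          rw [Finset.sum_add_distrib, Finset.sum_sub_distrib]
      _ = (∑ i ∈ Finset.range d, q.coeff i * a (n + 1 + i))
          - (∑ i ∈ Finset.range d, q.coeff i * a (n + i)) + p.eval 1 * a n := by
          congr 1
          · congr 1
            · rw [Finset.sum_range_succ']
              simp only [coeff_X_mul, mul_coeff_zero, coeff_X_zero, zero_mul, add_zero]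
              refine Finset.sum_congr rfl fun i _ => ?_
              ring_nf
            · rw [Finset.sum_range_succ, hqd, zero_mul, add_zero]
          · simp [coeff_C, ite_mul]
  have key : ∀ n, a n = b (n + 1) - b n := by
    intro n
    have h := ha n
    rw [hsum n] at h
    rw [hb, hb, div_sub_div_same, eq_div_iff hp1]
    linear_combination h
  intro n
  induction n with
  | zero => simp
  | succ n ih =>
    rw [Finset.sum_range_succ, ih, key n]
    ring
end

section
/- Let P : ℕ → ℤ be the Perrin sequence, P(0) = 3, P(1) = 0, P(2) = 2, P(n+3) = P(n+1) + P(n), and let c : ℕ → ℤ be defined by c(0) = −3, c(1) = 1, c(2) = −1, c(n+3) = −c(n+2) + c(n). Then for all natural numbers m and n, (P(m) + c(m)) · ∑_{k=0}^{n−1} P(mk) = (P(mn) − 3)·(1 − P(m) − c(m)) + (P(m(n+1)) − P(m))·(1 − P(m)) + P(m(n+2)) − P(2m). -/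
/-- coordinates of u·M where u = x·I + y·M + z·M², M the Perrin companion matrix -/
def pstep : ℤ × ℤ × ℤ → ℤ × ℤ × ℤ
  | (x, y, z) => (z, x + z, y)

/-- coordinates of Mᵏ in the basis I, M, M² -/
def w : ℕ → ℤ × ℤ × ℤ
  | 0 => (1, 0, 0)
  | (k + 1) => pstep (w k)

/-- multiplication in ℤ[M] in coordinates -/
def pmul : ℤ × ℤ × ℤ → ℤ × ℤ × ℤ → ℤ × ℤ × ℤ
  | (x, y, z), (a, b, d) =>
    (x * a + y * d + z * b,
     x * b + y * a + y * d + z * b + z * d,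
     x * d + z * a + y * b + z * d)

/-- trace functional -/
def tf (p : ℤ × ℤ × ℤ) : ℤ := 3 * p.1 + 2 * p.2.2

/-- second symmetric function of the regular representation -/
def sf (p : ℤ × ℤ × ℤ) : ℤ :=
  3 * p.1 ^ 2 + 4 * p.1 * p.2.2 + p.2.2 ^ 2 - p.2.1 ^ 2 - 3 * p.2.1 * p.2.2

/-- determinant (norm) -/
def df (p : ℤ × ℤ × ℤ) : ℤ :=
  p.1 * ((p.1 + p.2.2) * (p.1 + p.2.2) - (p.2.1 + p.2.2) * p.2.1)
  - p.2.2 * (p.2.1 * (p.1 + p.2.2) - (p.2.1 + p.2.2) * p.2.2)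
  + p.2.1 * (p.2.1 * p.2.1 - (p.1 + p.2.2) * p.2.2)

lemma pstep_pmul (p q : ℤ × ℤ × ℤ) : pstep (pmul p q) = pmul p (pstep q) := by
  obtain ⟨x, y, z⟩ := p; obtain ⟨a, b, d⟩ := q
  simp only [pstep, pmul, Prod.mk.injEq]
  refine ⟨by ring, by ring, by ring⟩

lemma pmul_one (p : ℤ × ℤ × ℤ) : pmul p (1, 0, 0) = p := by
  obtain ⟨x, y, z⟩ := p
  simp only [pmul, Prod.mk.injEq]
  refine ⟨by ring, by ring, by ring⟩

lemma w_add (a b : ℕ) : w (a + b) = pmul (w a) (w b) := by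
  induction b with
  | zero => rw [Nat.add_zero, show w 0 = ((1 : ℤ), (0 : ℤ), (0 : ℤ)) from rfl, pmul_one]
  | succ b ih => rw [← Nat.add_assoc, w, w, ih, pstep_pmul]

lemma tf_rec (p : ℤ × ℤ × ℤ) :
    tf (pstep p) + tf p = tf (pstep (pstep (pstep p))) := by
  obtain ⟨x, y, z⟩ := p
  simp only [pstep, tf]
  ring

lemma P_eq_aux : ∀ k, P k = tf (w k) ∧ P (k + 1) = tf (w (k + 1)) ∧
    P (k + 2) = tf (w (k + 2)) := by
  intro k
  induction k with
  | zero => refine ⟨by simp [P, w, tf, pstep], by simp [P, w, tf, pstep], by simp [P, w, tf, pstep]⟩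
  | succ k ih =>
    obtain ⟨h0, h1, h2⟩ := ih
    refine ⟨h1, h2, ?_⟩
    show P (k + 3) = tf (w (k + 3))
    rw [P, h0, h1]
    exact tf_rec (w k)

lemma P_eq (k : ℕ) : P k = tf (w k) := (P_eq_aux k).1

lemma sf_rec (p : ℤ × ℤ × ℤ) :
    sf (pstep (pstep (pstep p))) = -sf (pstep (pstep p)) + sf p := by
  obtain ⟨x, y, z⟩ := p
  simp only [pstep, sf]
  ring

lemma c_eq_aux : ∀ k, c k = -sf (w k) ∧ c (k + 1) = -sf (w (k + 1)) ∧
    c (k + 2) = -sf (w (k + 2)) := by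
  intro k
  induction k with
  | zero =>
    refine ⟨by simp [c, w, sf, pstep], by norm_num [c, w, sf, pstep], by norm_num [c, w, sf, pstep]⟩
  | succ k ih =>
    obtain ⟨h0, h1, h2⟩ := ih
    refine ⟨h1, h2, ?_⟩
    show c (k + 3) = -sf (w (k + 3))
    rw [c, h2, h0]
    have hr := sf_rec (w k)
    show -(-sf (pstep (pstep (w k)))) + -sf (w k) = -sf (pstep (pstep (pstep (w k))))
    linarith

lemma c_eq (k : ℕ) : c k = -sf (w k) := (c_eq_aux k).1

lemma df_step (p : ℤ × ℤ × ℤ) : df (pstep p) = df p := by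
  obtain ⟨x, y, z⟩ := p
  simp only [pstep, df]
  ring

lemma df_w (k : ℕ) : df (w k) = 1 := by
  induction k with
  | zero => simp [w, df]
  | succ k ih => rw [w, df_step, ih]

/-- Cayley–Hamilton style key identity -/
lemma key_poly (u v : ℤ × ℤ × ℤ) (h : df u = 1) :
    tf (pmul (pmul (pmul v u) u) u) =
      tf u * tf (pmul (pmul v u) u) + (-sf u) * tf (pmul v u) + tf v := by
  obtain ⟨x, y, z⟩ := u; obtain ⟨a, b, d⟩ := v
  simp only [pmul, tf, sf, df] at *
  linear_combination (3 * a + 2 * d) * h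

/-- the m-section recurrence -/
lemma key_s12 (m n : ℕ) :
    P (m * (n + 3)) = P m * P (m * (n + 2)) + c m * P (m * (n + 1)) + P (m * n) := by
  have e1 : m * (n + 1) = m * n + m := by ring
  have e2 : m * (n + 2) = m * n + m + m := by ring
  have e3 : m * (n + 3) = m * n + m + m + m := by ring
  rw [e1, e2, e3, P_eq (m * n + m + m + m), P_eq (m * n + m + m), P_eq (m * n + m),
    P_eq (m * n), P_eq m, c_eq m, w_add, w_add, w_add]
  exact key_poly (w m) (w (m * n)) (df_w m)

theorem perrin_msection_sum (m n : ℕ) :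
    (P m + c m) * ∑ k ∈ Finset.range n, P (m * k) =
      (P (m * n) - 3) * (1 - P m - c m) +
      (P (m * (n + 1)) - P m) * (1 - P m) +
      P (m * (n + 2)) - P (2 * m) := by
  induction n with
  | zero =>
    simp only [Finset.range_zero, Finset.sum_empty, mul_zero, Nat.mul_zero]
    have h1 : m * (0 + 1) = m := by ring
    have h2 : m * (0 + 2) = 2 * m := by ring
    rw [h1, h2]
    simp [P]
  | succ n ih =>
    rw [Finset.sum_range_succ, mul_add]
    have hk := key_s12 m n
    have e1 : m * (n + 1 + 1) = m * (n + 2) := by ring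
    have e2 : m * (n + 1 + 2) = m * (n + 3) := by ring
    rw [e1, e2, hk]
    linear_combination ih
end
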